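/- arXiv:2007.09253 — 3 statements merged into one kernel-verified Lean document; each statement's English description precedes it below -/
import Mathlib

section
/- Let G, H be finite groups, X ≤ G×H a subgroup and M a left 𝕜X-module. (a) The map M° → LHom^{X,X*X°}_{𝕜G}(M, 𝕜[k₁(X)]), λ ↦ (m ↦ Σ_{g ∈ k₁(X)} λ(g⁻¹m)·g), is a well-defined isomorphism of 𝕜X°-modules, with inverse sending f to (m ↦ t(f(m))) where t: 𝕜[k₁(X)] → 𝕜 is the 𝕜-linear map with g ↦ δ_{g,1}. (b) The map M° → RHom^{X,X°*X}_{𝕜H}(M, 𝕜[k₂(X)]), λ ↦ (m ↦ Σ_{h ∈ k₂(X)} λ(m·h⁻¹)·h), is a well-defined isomorphism of 𝕜X°-modules, with inverse f ↦ (m ↦ t(f(m))). -/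
/-!
For a finite group `K` acting on `M`, a functional `λ` on `M` gives the `K`-equivariant map
`m ↦ ∑ₖ λ(k⁻¹m)·k` into `𝕜K`, and conversely an equivariant `f` is recovered from the
coefficients at `1` of its values, because the coefficient of `f m` at `k` is the coefficient of
`f (k⁻¹m)` at `1`. Part (a) is this for `K = k₁(X)` acting through `(g,1)`, part (b) its mirror
image for the right action `m·h = (1,h⁻¹)·m` of `K = k₂(X)`. Compatibility with the `X°`-actions comes from reindexing the
sum by conjugation with a coordinate of an element of `X`, which normalizes `k₁(X)` and `k₂(X)`.
-/

namespace Stmt11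

/-- `k₁(X) = {g ∈ G ∣ (g,1) ∈ X}`. -/
def k1 {G H : Type*} [Group G] [Group H] (X : Subgroup (G × H)) : Subgroup G :=
  X.comap (MonoidHom.inl G H)

/-- `k₂(X) = {h ∈ H ∣ (1,h) ∈ X}`. -/
def k2 {G H : Type*} [Group G] [Group H] (X : Subgroup (G × H)) : Subgroup H :=
  X.comap (MonoidHom.inr G H)

/-- `p₁(X)`, the image of `X` under the first projection. -/
def p1 {G H : Type*} [Group G] [Group H] (X : Subgroup (G × H)) : Subgroup G :=
  X.map (MonoidHom.fst G H)

/-- `p₂(X)`, the image of `X` under the second projection. -/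
def p2 {G H : Type*} [Group G] [Group H] (X : Subgroup (G × H)) : Subgroup H :=
  X.map (MonoidHom.snd G H)

/-- The opposite subgroup `X° = {(h,g) ∣ (g,h) ∈ X}`. -/
def opp {G H : Type*} [Group G] [Group H] (X : Subgroup (G × H)) : Subgroup (H × G) :=
  X.map ((MulEquiv.prodComm : (G × H) ≃* (H × G)).toMonoidHom)

/-- The composition `X*Y` of subgroup correspondences. -/
def comp {G H K : Type*} [Group G] [Group H] [Group K]
    (X : Subgroup (G × H)) (Y : Subgroup (H × K)) : Subgroup (G × K) where
  carrier := {gk | ∃ h : H, (gk.1, h) ∈ X ∧ (h, gk.2) ∈ Y}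
  one_mem' := ⟨1, X.one_mem, Y.one_mem⟩
  mul_mem' := by
    rintro ⟨g, k⟩ ⟨g', k'⟩ ⟨h, hX, hY⟩ ⟨h', hX', hY'⟩
    exact ⟨h * h', X.mul_mem hX hX', Y.mul_mem hY hY'⟩
  inv_mem' := by
    rintro ⟨g, k⟩ ⟨h, hX, hY⟩
    exact ⟨h⁻¹, X.inv_mem hX, Y.inv_mem hY⟩

lemma mem_comp {G H K : Type*} [Group G] [Group H] [Group K]
    {X : Subgroup (G × H)} {Y : Subgroup (H × K)} {x : G × K} :
    x ∈ comp X Y ↔ ∃ h : H, (x.1, h) ∈ X ∧ (h, x.2) ∈ Y := Iff.rfl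

lemma mem_opp {G H : Type*} [Group G] [Group H] {X : Subgroup (G × H)} {x : H × G} :
    x ∈ opp X ↔ (x.2, x.1) ∈ X := by
  rw [opp, Subgroup.mem_map]
  constructor
  · rintro ⟨⟨g, h⟩, hgh, rfl⟩
    simpa using hgh
  · intro hx
    exact ⟨(x.2, x.1), hx, rfl⟩

/-- The diagonal subgroup `Δ(P) = {(g,g) ∣ g ∈ P} ≤ G × G`. -/
def diag {G : Type*} [Group G] (P : Subgroup G) : Subgroup (G × G) :=
  (P.subtype.prod P.subtype).range

/-- The twisted diagonal subgroup `Δ(P,φ,Q) = {(φ y, y) ∣ y ∈ Q} ≤ G × H`. -/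
def tdiag {G H : Type*} [Group G] [Group H] (P : Subgroup G) (Q : Subgroup H)
    (φ : Q ≃* P) : Subgroup (G × H) :=
  ((P.subtype.comp φ.toMonoidHom).prod Q.subtype).range

open scoped TensorProduct

section ExtendedTensor

variable {𝕜 : Type*} [CommRing 𝕜]

/-- The submodule of relations defining the balanced tensor product
`M ⊗_{𝕜[k₂(X)∩k₁(Y)]} N` over the middle group: it is spanned by the elements
`(m·b) ⊗ n - m ⊗ (b·n)` with `b ∈ k₂(X)∩k₁(Y)`, where `m·b = (1,b⁻¹)·m` and
`b·n = (b,1)·n`. -/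
def midRel {A B C : Type*} [Group A] [Group B] [Group C]
    {M N : Type*} [AddCommGroup M] [Module 𝕜 M] [AddCommGroup N] [Module 𝕜 N]
    (X : Subgroup (A × B)) (Y : Subgroup (B × C))
    (ρ : Representation 𝕜 ↥X M) (σ : Representation 𝕜 ↥Y N) :
    Submodule 𝕜 (M ⊗[𝕜] N) :=
  Submodule.span 𝕜 {z | ∃ (b : B) (h1 : (((1 : A), b⁻¹) : A × B) ∈ X)
    (h2 : ((b, (1 : C)) : B × C) ∈ Y) (m : M) (n : N),
      z = (ρ ⟨((1 : A), b⁻¹), h1⟩ m) ⊗ₜ[𝕜] n - m ⊗ₜ[𝕜] (σ ⟨(b, (1 : C)), h2⟩ n)}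

/-- The underlying `𝕜`-module of the extended tensor product `M ⊗^{X,Y}_{𝕜B} N`. -/
abbrev ExtTen {A B C : Type*} [Group A] [Group B] [Group C]
    {M N : Type*} [AddCommGroup M] [Module 𝕜 M] [AddCommGroup N] [Module 𝕜 N]
    (X : Subgroup (A × B)) (Y : Subgroup (B × C))
    (ρ : Representation 𝕜 ↥X M) (σ : Representation 𝕜 ↥Y N) :=
  (M ⊗[𝕜] N) ⧸ midRel X Y ρ σ

/-- The canonical projection onto the extended tensor product. -/
def extMk {A B C : Type*} [Group A] [Group B] [Group C]
    {M N : Type*} [AddCommGroup M] [Module 𝕜 M] [AddCommGroup N] [Module 𝕜 N]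
    (X : Subgroup (A × B)) (Y : Subgroup (B × C))
    (ρ : Representation 𝕜 ↥X M) (σ : Representation 𝕜 ↥Y N) :
    (M ⊗[𝕜] N) →ₗ[𝕜] ExtTen X Y ρ σ :=
  (midRel X Y ρ σ).mkQ

/-- The `𝕜`-module `LHom^{X,Y}_{𝕜A}(M,N) = Hom_{𝕜[k₁(X)∩k₁(Y)]}(M,N)` of
`𝕜`-linear maps commuting with the actions of `k₁(X)∩k₁(Y)` (via `(a,1)`). -/
def lHomSub {A B C : Type*} [Group A] [Group B] [Group C]
    {M N : Type*} [AddCommGroup M] [Module 𝕜 M] [AddCommGroup N] [Module 𝕜 N]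
    (X : Subgroup (A × B)) (Y : Subgroup (A × C))
    (ρ : Representation 𝕜 ↥X M) (σ : Representation 𝕜 ↥Y N) :
    Submodule 𝕜 (M →ₗ[𝕜] N) where
  carrier := {f | ∀ (a : A) (h1 : ((a, (1 : B)) : A × B) ∈ X)
      (h2 : ((a, (1 : C)) : A × C) ∈ Y) (m : M),
        f (ρ ⟨(a, 1), h1⟩ m) = σ ⟨(a, 1), h2⟩ (f m)}
  add_mem' := by
    intro f g hf hg a h1 h2 m
    simp only [LinearMap.add_apply, hf a h1 h2 m, hg a h1 h2 m, map_add]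
  zero_mem' := by
    intro a h1 h2 m
    simp
  smul_mem' := by
    intro c f hf a h1 h2 m
    simp only [LinearMap.smul_apply, hf a h1 h2 m, map_smul]

/-- The `𝕜`-module `RHom^{X,Y}_{𝕜A}(M,N) = Hom_{𝕜[k₂(X)∩k₂(Y)]}(M,N)` of
`𝕜`-linear maps commuting with the actions of `k₂(X)∩k₂(Y)` (via `(1,a)`). -/
def rHomSub {A B C : Type*} [Group A] [Group B] [Group C]
    {M N : Type*} [AddCommGroup M] [Module 𝕜 M] [AddCommGroup N] [Module 𝕜 N]
    (X : Subgroup (B × A)) (Y : Subgroup (C × A))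
    (ρ : Representation 𝕜 ↥X M) (σ : Representation 𝕜 ↥Y N) :
    Submodule 𝕜 (M →ₗ[𝕜] N) where
  carrier := {f | ∀ (a : A) (h1 : (((1 : B), a) : B × A) ∈ X)
      (h2 : (((1 : C), a) : C × A) ∈ Y) (m : M),
        f (ρ ⟨(1, a), h1⟩ m) = σ ⟨(1, a), h2⟩ (f m)}
  add_mem' := by
    intro f g hf hg a h1 h2 m
    simp only [LinearMap.add_apply, hf a h1 h2 m, hg a h1 h2 m, map_add]
  zero_mem' := by
    intro a h1 h2 m
    simp
  smul_mem' := by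
    intro c f hf a h1 h2 m
    simp only [LinearMap.smul_apply, hf a h1 h2 m, map_smul]

/-- The `𝕜`-module of `𝕜I`-linear maps between two representations of a group
`I`, e.g. `Hom_{𝕜[X*X°]}(-,-)` or `Hom_{𝕜X}(-,-)`. -/
def fullHomSub {I : Type*} [Group I]
    {M N : Type*} [AddCommGroup M] [Module 𝕜 M] [AddCommGroup N] [Module 𝕜 N]
    (ρ : Representation 𝕜 I M) (σ : Representation 𝕜 I N) :
    Submodule 𝕜 (M →ₗ[𝕜] N) where
  carrier := {f | ∀ (x : I) (m : M), f (ρ x m) = σ x (f m)}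
  add_mem' := by
    intro f g hf hg x m
    simp only [LinearMap.add_apply, hf x m, hg x m, map_add]
  zero_mem' := by
    intro x m
    simp
  smul_mem' := by
    intro c f hf x m
    simp only [LinearMap.smul_apply, hf x m, map_smul]

/-- Relations defining the induced module `Ind_{X'}^{X}(M') = 𝕜X ⊗_{𝕜X'} M'`:
spanned by `(b·a) ⊗ m - b ⊗ (a·m)` for `a ∈ X'`, `b ∈ X`. -/
noncomputable def indRel {I : Type*} [Group I] (X' X : Subgroup I)
    {M' : Type*} [AddCommGroup M'] [Module 𝕜 M']
    (ρ' : Representation 𝕜 ↥X' M') :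
    Submodule 𝕜 (MonoidAlgebra 𝕜 ↥X ⊗[𝕜] M') :=
  Submodule.span 𝕜 {z | ∃ (b : ↥X) (a : I) (h1 : a ∈ X') (h2 : a ∈ X) (m : M'),
    z = (MonoidAlgebra.single (b * ⟨a, h2⟩) (1 : 𝕜)) ⊗ₜ[𝕜] m -
        (MonoidAlgebra.single b (1 : 𝕜)) ⊗ₜ[𝕜] (ρ' ⟨a, h1⟩ m)}

/-- The underlying `𝕜`-module of the induced module `Ind_{X'}^{X}(M')`. -/
abbrev Ind {I : Type*} [Group I] (X' X : Subgroup I)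
    {M' : Type*} [AddCommGroup M'] [Module 𝕜 M']
    (ρ' : Representation 𝕜 ↥X' M') :=
  (MonoidAlgebra 𝕜 ↥X ⊗[𝕜] M') ⧸ indRel X' X ρ'

/-- The canonical projection onto the induced module. -/
noncomputable def indMk {I : Type*} [Group I] (X' X : Subgroup I)
    {M' : Type*} [AddCommGroup M'] [Module 𝕜 M']
    (ρ' : Representation 𝕜 ↥X' M') :
    (MonoidAlgebra 𝕜 ↥X ⊗[𝕜] M') →ₗ[𝕜] Ind X' X ρ' :=
  (indRel X' X ρ').mkQ

end ExtendedTensor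

section Homs

variable {G H : Type*} [Group G] [Group H]

lemma k1_prod_mem {X : Subgroup (G × H)} (u : ↥(k1 X)) :
    (((u : G), (1 : H)) : G × H) ∈ X := u.2

lemma k1_inv_prod_mem {X : Subgroup (G × H)} (u : ↥(k1 X)) :
    (((u : G)⁻¹, (1 : H)) : G × H) ∈ X := by
  simpa using X.inv_mem (k1_prod_mem u)

lemma k2_prod_mem {X : Subgroup (G × H)} (u : ↥(k2 X)) :
    (((1 : G), (u : H)) : G × H) ∈ X := u.2

/-- The embedding `k₁(X) →* X`, `u ↦ (u,1)`. -/
def k1Hom (X : Subgroup (G × H)) : ↥(k1 X) →* ↥X where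
  toFun u := ⟨((u : G), (1 : H)), u.2⟩
  map_one' := rfl
  map_mul' u v := Subtype.ext (by simp)

/-- The embedding `k₁(X) →* X°`, `u ↦ (1,u)`, giving the right `𝕜[k₁(X)]`-module
structure (read as a left module) on left `𝕜X°`-modules. -/
def k1HomOp (X : Subgroup (G × H)) : ↥(k1 X) →* ↥(opp X) where
  toFun u := ⟨((1 : H), (u : G)), mem_opp.mpr u.2⟩
  map_one' := rfl
  map_mul' u v := Subtype.ext (by simp)

/-- The embedding `k₂(X) →* X`, `u ↦ (1,u)`. -/
def k2Hom (X : Subgroup (G × H)) : ↥(k2 X) →* ↥X where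
  toFun u := ⟨((1 : G), (u : H)), u.2⟩
  map_one' := rfl
  map_mul' u v := Subtype.ext (by simp)

end Homs

open MonoidAlgebra

section PermutedBasis

variable {𝕜 K : Type*} [CommRing 𝕜] [Fintype K]

lemma coeff_sum_single (c : K → 𝕜) (u : K) : (∑ k, single k (c k)).coeff u = c u := by
  simp only [coeff_sum, coeff_single, Finsupp.coe_univ_sum_single]

lemma sum_single_coeff (v : MonoidAlgebra 𝕜 K) : ∑ k, single k (v.coeff k) = v := by
  ext u
  exact coeff_sum_single _ u

variable {T : MonoidAlgebra 𝕜 K →ₗ[𝕜] MonoidAlgebra 𝕜 K} {e : K ≃ K}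

lemma map_sum_single_of_perm (hT : ∀ k c, T (single k c) = single (e k) c) (c : K → 𝕜) :
    T (∑ k, single k (c k)) = ∑ k, single k (c (e.symm k)) := by
  rw [map_sum, ← e.sum_comp fun k => single k (c (e.symm k))]
  simp only [hT, Equiv.symm_apply_apply]

lemma coeff_map_of_perm (hT : ∀ k c, T (single k c) = single (e k) c)
    (v : MonoidAlgebra 𝕜 K) (u : K) : (T v).coeff u = v.coeff (e.symm u) := by
  conv_lhs => rw [← sum_single_coeff v, map_sum_single_of_perm hT, coeff_sum_single]

end PermutedBasis

section DualSum

variable {𝕜 K M : Type*} [CommRing 𝕜] [Fintype K] [AddCommGroup M] [Module 𝕜 M]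

noncomputable def dualSum (σ : K → Module.End 𝕜 M) :
    (M →ₗ[𝕜] 𝕜) →ₗ[𝕜] M →ₗ[𝕜] MonoidAlgebra 𝕜 K :=
  ∑ k, LinearMap.compRight 𝕜 (lsingle k) ∘ₗ LinearMap.lcomp 𝕜 𝕜 (σ k)

@[simp] lemma dualSum_apply (σ : K → Module.End 𝕜 M) (lam : M →ₗ[𝕜] 𝕜) (m : M) :
    dualSum σ lam m = ∑ k, single k (lam (σ k m)) := by
  simp [dualSum, LinearMap.sum_apply, lsingle_apply]

variable [One K]

noncomputable def dualSumEquiv (σ : K → Module.End 𝕜 M) (hσ : σ 1 = 1)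
    (P : Submodule 𝕜 (M →ₗ[𝕜] MonoidAlgebra 𝕜 K)) (hmem : ∀ lam, dualSum σ lam ∈ P)
    (hcoeff : ∀ f ∈ P, ∀ k m, (f m).coeff k = (f (σ k m)).coeff 1) :
    (M →ₗ[𝕜] 𝕜) ≃ₗ[𝕜] P :=
  LinearEquiv.ofLinearMap ((dualSum σ).codRestrict P hmem)
    (LinearMap.compRight 𝕜 (Finsupp.lapply 1 ∘ₗ (coeffLinearEquiv 𝕜).toLinearMap) ∘ₗ P.subtype)
    (by
      ext f m : 3
      refine MonoidAlgebra.ext (Finsupp.ext fun k => ?_)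
      simp only [LinearMap.comp_apply, LinearMap.codRestrict_apply, LinearMap.id_apply,
        dualSum_apply, coeff_sum_single]
      exact (hcoeff f f.2 k m).symm)
    (by
      ext lam m
      change (dualSum σ lam m).coeff 1 = lam m
      rw [dualSum_apply, coeff_sum_single, hσ, Module.End.one_apply])

end DualSum

section TwoSided

variable {𝕜 G : Type*} [CommRing 𝕜] [Group G] {S : Subgroup (G × G)} {N : Subgroup G}

def IsTwoSidedAction (ρ : Representation 𝕜 S (MonoidAlgebra 𝕜 N)) : Prop :=
  ∀ (g g' : G) (hm : (g, g') ∈ S) (u : N) (hu : g * (u : G) * g'⁻¹ ∈ N) (c : 𝕜),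
    ρ ⟨(g, g'), hm⟩ (single u c) = single (⟨g * (u : G) * g'⁻¹, hu⟩ : N) c

lemma IsTwoSidedAction.map_single {ρ : Representation 𝕜 S (MonoidAlgebra 𝕜 N)}
    (hρ : IsTwoSidedAction ρ) {g g' : G} (hm : (g, g') ∈ S) {e : N ≃ N}
    (he : ∀ u, (e u : G) = g * u * g'⁻¹) (u : N) (c : 𝕜) :
    ρ ⟨(g, g'), hm⟩ (single u c) = single (e u) c := by
  rw [hρ g g' hm u (he u ▸ (e u).2)]
  exact congrArg (single · c) (Subtype.ext (he u).symm)

def conjPerm {c : G} (hc : c ∈ Subgroup.normalizer (N : Set G)) : N ≃ N where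
  toFun u := ⟨c * u * c⁻¹, (Subgroup.mem_normalizer_iff.1 hc u).1 u.2⟩
  invFun u := ⟨c⁻¹ * u * c, (Subgroup.mem_normalizer_iff''.1 hc u).1 u.2⟩
  left_inv u := Subtype.ext (by simp [mul_assoc])
  right_inv u := Subtype.ext (by simp [mul_assoc])

@[simp] lemma coe_conjPerm_symm {c : G} (hc : c ∈ Subgroup.normalizer (N : Set G)) (u : N) :
    ((conjPerm hc).symm u : G) = c⁻¹ * u * c := rfl

end TwoSided

lemma Representation.map_mul_apply {𝕜 Γ M : Type*} [CommRing 𝕜] [Monoid Γ]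
    [AddCommGroup M] [Module 𝕜 M] (ρ : Representation 𝕜 Γ M) (x y : Γ) (m : M) :
    ρ (x * y) m = ρ x (ρ y m) := by
  rw [map_mul, Module.End.mul_apply]

section Kernels

variable {G H : Type*} [Group G] [Group H] {X : Subgroup (G × H)}

lemma mem_comp_opp_of_mem_k1 {g : G} (hg : g ∈ k1 X) : (g, 1) ∈ comp X (opp X) :=
  ⟨1, hg, one_mem _⟩

lemma mem_opp_comp_of_mem_k2 {h : H} (hh : h ∈ k2 X) : (1, h) ∈ comp (opp X) X :=
  ⟨1, one_mem _, hh⟩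

lemma fst_mem_normalizer_k1 {c : G} {b : H} (hcb : (c, b) ∈ X) :
    c ∈ Subgroup.normalizer (k1 X : Set G) := by
  refine Subgroup.mem_normalizer_iff.2 fun g => ⟨fun hg => ?_, fun hg => ?_⟩
  · simpa [k1] using mul_mem (mul_mem hcb hg) (inv_mem hcb)
  · simpa [k1, mul_assoc] using mul_mem (mul_mem (inv_mem hcb) hg) hcb

lemma snd_mem_normalizer_k2 {c : G} {b : H} (hcb : (c, b) ∈ X) :
    b ∈ Subgroup.normalizer (k2 X : Set H) := by
  refine Subgroup.mem_normalizer_iff.2 fun h => ⟨fun hh => ?_, fun hh => ?_⟩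
  · simpa [k2] using mul_mem (mul_mem hcb hh) (inv_mem hcb)
  · simpa [k2, mul_assoc] using mul_mem (mul_mem (inv_mem hcb) hh) hcb

end Kernels

section LeftDual

variable {𝕜 G H M : Type*} [CommRing 𝕜] [Group G] [Group H] {X : Subgroup (G × H)}
  [Fintype (k1 X)] [AddCommGroup M] [Module 𝕜 M] (ρM : Representation 𝕜 X M)
  {ρA : Representation 𝕜 (comp X (opp X)) (MonoidAlgebra 𝕜 (k1 X))}

noncomputable def toLHom : (M →ₗ[𝕜] 𝕜) →ₗ[𝕜] M →ₗ[𝕜] MonoidAlgebra 𝕜 (k1 X) :=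
  dualSum fun g => ρM ⟨((g : G)⁻¹, 1), k1_inv_prod_mem g⟩

lemma toLHom_mem_lHomSub (hρA : IsTwoSidedAction ρA) (lam : M →ₗ[𝕜] 𝕜) :
    toLHom ρM lam ∈ lHomSub X (comp X (opp X)) ρM ρA := by
  intro a ha hA m
  rw [toLHom, dualSum_apply, dualSum_apply,
    map_sum_single_of_perm (hρA.map_single hA (e := Equiv.mulLeft ⟨a, ha⟩) fun u => by simp)]
  refine Finset.sum_congr rfl fun g _ => congrArg (single g ∘ lam) ?_
  rw [← Representation.map_mul_apply]
  exact congrArg (ρM · m) (Subtype.ext (by simp))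

lemma coeff_eq_of_mem_lHomSub (hρA : IsTwoSidedAction ρA) {f : M →ₗ[𝕜] MonoidAlgebra 𝕜 (k1 X)}
    (hf : f ∈ lHomSub X (comp X (opp X)) ρM ρA) (g : k1 X) (m : M) :
    (f m).coeff g = (f (ρM ⟨((g : G)⁻¹, 1), k1_inv_prod_mem g⟩ m)).coeff 1 := by
  rw [hf _ _ (mem_comp_opp_of_mem_k1 (inv_mem g.2)),
    coeff_map_of_perm (hρA.map_single _ (e := Equiv.mulLeft g⁻¹) fun u => by simp)]
  simp

lemma toLHom_comp_inv (hρA : IsTwoSidedAction ρA) {c : G} {b : H} (hcb : (c, b) ∈ X)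
    (hcc : (c, c) ∈ comp X (opp X)) (lam : M →ₗ[𝕜] 𝕜) (m : M) :
    toLHom ρM (lam ∘ₗ ρM ⟨(c, b), hcb⟩⁻¹) m =
      ρA ⟨(c, c), hcc⟩ (toLHom ρM lam (ρM ⟨(c, b), hcb⟩⁻¹ m)) := by
  rw [toLHom, dualSum_apply, dualSum_apply, map_sum_single_of_perm
    (hρA.map_single hcc (e := conjPerm (fst_mem_normalizer_k1 hcb)) fun u => rfl)]
  refine Finset.sum_congr rfl fun g _ => congrArg (single g ∘ lam) ?_
  rw [← Representation.map_mul_apply, ← Representation.map_mul_apply]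
  exact congrArg (ρM · m) (Subtype.ext (by simp [mul_assoc]))

noncomputable def dualEquivLHom (hρA : IsTwoSidedAction ρA) :
    (M →ₗ[𝕜] 𝕜) ≃ₗ[𝕜] lHomSub X (comp X (opp X)) ρM ρA :=
  dualSumEquiv (fun g : k1 X => ρM ⟨((g : G)⁻¹, 1), k1_inv_prod_mem g⟩)
    ((congrArg ρM (Subtype.ext (by simp))).trans (map_one ρM)) _
    (toLHom_mem_lHomSub ρM hρA) fun _ hf => coeff_eq_of_mem_lHomSub ρM hρA hf

lemma dualEquivLHom_apply (hρA : IsTwoSidedAction ρA) (lam : M →ₗ[𝕜] 𝕜) (m : M) :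
    (dualEquivLHom ρM hρA lam : M →ₗ[𝕜] MonoidAlgebra 𝕜 (k1 X)) m =
      ∑ g : k1 X, single g (lam (ρM ⟨((g : G)⁻¹, 1), k1_inv_prod_mem g⟩ m)) :=
  dualSum_apply _ lam m

lemma dualEquivLHom_symm_apply (hρA : IsTwoSidedAction ρA)
    (f : lHomSub X (comp X (opp X)) ρM ρA) (m : M) :
    (dualEquivLHom ρM hρA).symm f m = ((f : M →ₗ[𝕜] MonoidAlgebra 𝕜 (k1 X)) m).coeff 1 :=
  rfl

end LeftDual

section RightDual

variable {𝕜 G H M : Type*} [CommRing 𝕜] [Group G] [Group H] {X : Subgroup (G × H)}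
  [Fintype (k2 X)] [AddCommGroup M] [Module 𝕜 M] (ρM : Representation 𝕜 X M)
  {ρB : Representation 𝕜 (comp (opp X) X) (MonoidAlgebra 𝕜 (k2 X))}

noncomputable def toRHom : (M →ₗ[𝕜] 𝕜) →ₗ[𝕜] M →ₗ[𝕜] MonoidAlgebra 𝕜 (k2 X) :=
  dualSum fun h => ρM ⟨(1, (h : H)), k2_prod_mem h⟩

lemma toRHom_mem_rHomSub (hρB : IsTwoSidedAction ρB) (lam : M →ₗ[𝕜] 𝕜) :
    toRHom ρM lam ∈ rHomSub X (comp (opp X) X) ρM ρB := by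
  intro a ha hB m
  rw [toRHom, dualSum_apply, dualSum_apply,
    map_sum_single_of_perm (hρB.map_single hB (e := Equiv.mulRight ⟨a, ha⟩⁻¹) fun u => by simp)]
  refine Finset.sum_congr rfl fun h _ => congrArg (single h ∘ lam) ?_
  rw [← Representation.map_mul_apply]
  exact congrArg (ρM · m) (Subtype.ext (by simp))

lemma coeff_eq_of_mem_rHomSub (hρB : IsTwoSidedAction ρB) {f : M →ₗ[𝕜] MonoidAlgebra 𝕜 (k2 X)}
    (hf : f ∈ rHomSub X (comp (opp X) X) ρM ρB) (h : k2 X) (m : M) :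
    (f m).coeff h = (f (ρM ⟨(1, (h : H)), k2_prod_mem h⟩ m)).coeff 1 := by
  rw [hf _ _ (mem_opp_comp_of_mem_k2 h.2),
    coeff_map_of_perm (hρB.map_single _ (e := Equiv.mulRight h⁻¹) fun u => by simp)]
  simp

lemma toRHom_comp_inv (hρB : IsTwoSidedAction ρB) {c : G} {b : H} (hcb : (c, b) ∈ X)
    (hbb : (b, b) ∈ comp (opp X) X) (lam : M →ₗ[𝕜] 𝕜) (m : M) :
    toRHom ρM (lam ∘ₗ ρM ⟨(c, b), hcb⟩⁻¹) m =
      ρB ⟨(b, b), hbb⟩ (toRHom ρM lam (ρM ⟨(c, b), hcb⟩⁻¹ m)) := by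
  rw [toRHom, dualSum_apply, dualSum_apply, map_sum_single_of_perm
    (hρB.map_single hbb (e := conjPerm (snd_mem_normalizer_k2 hcb)) fun u => rfl)]
  refine Finset.sum_congr rfl fun h _ => congrArg (single h ∘ lam) ?_
  rw [← Representation.map_mul_apply, ← Representation.map_mul_apply]
  exact congrArg (ρM · m) (Subtype.ext (by simp [mul_assoc]))

noncomputable def dualEquivRHom (hρB : IsTwoSidedAction ρB) :
    (M →ₗ[𝕜] 𝕜) ≃ₗ[𝕜] rHomSub X (comp (opp X) X) ρM ρB :=
  dualSumEquiv (fun h : k2 X => ρM ⟨(1, (h : H)), k2_prod_mem h⟩)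
    ((congrArg ρM (Subtype.ext (by simp))).trans (map_one ρM)) _
    (toRHom_mem_rHomSub ρM hρB) fun _ hf => coeff_eq_of_mem_rHomSub ρM hρB hf

lemma dualEquivRHom_apply (hρB : IsTwoSidedAction ρB) (lam : M →ₗ[𝕜] 𝕜) (m : M) :
    (dualEquivRHom ρM hρB lam : M →ₗ[𝕜] MonoidAlgebra 𝕜 (k2 X)) m =
      ∑ h : k2 X, single h (lam (ρM ⟨(1, (h : H)), k2_prod_mem h⟩ m)) :=
  dualSum_apply _ lam m

lemma dualEquivRHom_symm_apply (hρB : IsTwoSidedAction ρB)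
    (f : rHomSub X (comp (opp X) X) ρM ρB) (m : M) :
    (dualEquivRHom ρM hρB).symm f m = ((f : M →ₗ[𝕜] MonoidAlgebra 𝕜 (k2 X)) m).coeff 1 :=
  rfl

end RightDual

theorem stmt11_general {𝕜 : Type*} [CommRing 𝕜]
    {G H : Type*} [Group G] [Group H]
    (X : Subgroup (G × H)) [Fintype ↥(k1 X)] [Fintype ↥(k2 X)]
    {M : Type*} [AddCommGroup M] [Module 𝕜 M]
    (ρM : Representation 𝕜 ↥X M)
    -- the `𝕜[X*X°]`-module structure on `𝕜[k₁(X)]`, `(g,g')·u = g·u·g'⁻¹`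
    (ρA : Representation 𝕜 ↥(comp X (opp X)) (MonoidAlgebra 𝕜 ↥(k1 X)))
    (hρA : ∀ (g g' : G) (hm : (g, g') ∈ comp X (opp X)) (u : ↥(k1 X))
      (hu : g * (u : G) * g'⁻¹ ∈ k1 X) (c : 𝕜),
      ρA ⟨(g, g'), hm⟩ (MonoidAlgebra.single u c) =
        MonoidAlgebra.single (⟨g * (u : G) * g'⁻¹, hu⟩ : ↥(k1 X)) c)
    -- the `𝕜[X°*X]`-module structure on `𝕜[k₂(X)]`, `(h,h')·v = h·v·h'⁻¹`
    (ρB : Representation 𝕜 ↥(comp (opp X) X) (MonoidAlgebra 𝕜 ↥(k2 X)))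
    (hρB : ∀ (h h' : H) (hm : (h, h') ∈ comp (opp X) X) (v : ↥(k2 X))
      (hv : h * (v : H) * h'⁻¹ ∈ k2 X) (c : 𝕜),
      ρB ⟨(h, h'), hm⟩ (MonoidAlgebra.single v c) =
        MonoidAlgebra.single (⟨h * (v : H) * h'⁻¹, hv⟩ : ↥(k2 X)) c)
    -- the `𝕜X°`-module structure on the dual `M°`
    (ρD : Representation 𝕜 ↥(opp X) (M →ₗ[𝕜] 𝕜))
    (hρD : ∀ (b : H) (c : G) (hbc : (b, c) ∈ opp X) (hcb : (c, b) ∈ X)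
      (lam : M →ₗ[𝕜] 𝕜) (m : M),
      (ρD ⟨(b, c), hbc⟩ lam) m = lam (ρM (⟨(c, b), hcb⟩)⁻¹ m))
    -- the `𝕜[X°*(X*X°)]`-module structure on `LHom^{X,X*X°}(M, 𝕜[k₁(X)])`
    (ρE : Representation 𝕜 ↥(comp (opp X) (comp X (opp X)))
      ↥(lHomSub X (comp X (opp X)) ρM ρA))
    (hρE : ∀ (b : H) (c : G) (hbc : (b, c) ∈ comp (opp X) (comp X (opp X)))
      (a : G) (h1 : (a, b) ∈ X) (h2 : (a, c) ∈ comp X (opp X))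
      (f : ↥(lHomSub X (comp X (opp X)) ρM ρA)) (m : M),
      ((ρE ⟨(b, c), hbc⟩ f : M →ₗ[𝕜] MonoidAlgebra 𝕜 ↥(k1 X))) m =
        ρA ⟨(a, c), h2⟩ ((f : M →ₗ[𝕜] MonoidAlgebra 𝕜 ↥(k1 X)) (ρM (⟨(a, b), h1⟩)⁻¹ m)))
    -- the `𝕜[(X°*X)*X°]`-module structure on `RHom^{X,X°*X}(M, 𝕜[k₂(X)])`
    (ρF : Representation 𝕜 ↥(comp (comp (opp X) X) (opp X))
      ↥(rHomSub X (comp (opp X) X) ρM ρB))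
    (hρF : ∀ (c : H) (b : G) (hcb : (c, b) ∈ comp (comp (opp X) X) (opp X))
      (a : H) (h1 : (c, a) ∈ comp (opp X) X) (h2 : (b, a) ∈ X)
      (f : ↥(rHomSub X (comp (opp X) X) ρM ρB)) (m : M),
      ((ρF ⟨(c, b), hcb⟩ f : M →ₗ[𝕜] MonoidAlgebra 𝕜 ↥(k2 X))) m =
        ρB ⟨(c, a), h1⟩ ((f : M →ₗ[𝕜] MonoidAlgebra 𝕜 ↥(k2 X)) (ρM (⟨(b, a), h2⟩)⁻¹ m))) :
    (∃ Φ : (M →ₗ[𝕜] 𝕜) ≃ₗ[𝕜] ↥(lHomSub X (comp X (opp X)) ρM ρA),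
      (∀ (lam : M →ₗ[𝕜] 𝕜) (m : M),
        ((Φ lam : M →ₗ[𝕜] MonoidAlgebra 𝕜 ↥(k1 X))) m =
          ∑ g : ↥(k1 X), MonoidAlgebra.single g
            (lam (ρM ⟨((g : G)⁻¹, (1 : H)), k1_inv_prod_mem g⟩ m))) ∧
      (∀ (f : ↥(lHomSub X (comp X (opp X)) ρM ρA)) (m : M),
        (Φ.symm f) m = ((f : M →ₗ[𝕜] MonoidAlgebra 𝕜 ↥(k1 X)) m).coeff 1) ∧
      (∀ (x : H × G) (h1 : x ∈ opp X)
        (h2 : x ∈ comp (opp X) (comp X (opp X))) (lam : M →ₗ[𝕜] 𝕜),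
        Φ (ρD ⟨x, h1⟩ lam) = ρE ⟨x, h2⟩ (Φ lam))) ∧
    (∃ Ψ : (M →ₗ[𝕜] 𝕜) ≃ₗ[𝕜] ↥(rHomSub X (comp (opp X) X) ρM ρB),
      (∀ (lam : M →ₗ[𝕜] 𝕜) (m : M),
        ((Ψ lam : M →ₗ[𝕜] MonoidAlgebra 𝕜 ↥(k2 X))) m =
          ∑ h : ↥(k2 X), MonoidAlgebra.single h
            (lam (ρM ⟨((1 : G), (h : H)), k2_prod_mem h⟩ m))) ∧
      (∀ (f : ↥(rHomSub X (comp (opp X) X) ρM ρB)) (m : M),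
        (Ψ.symm f) m = ((f : M →ₗ[𝕜] MonoidAlgebra 𝕜 ↥(k2 X)) m).coeff 1) ∧
      (∀ (x : H × G) (h1 : x ∈ opp X)
        (h2 : x ∈ comp (comp (opp X) X) (opp X)) (lam : M →ₗ[𝕜] 𝕜),
        Ψ (ρD ⟨x, h1⟩ lam) = ρF ⟨x, h2⟩ (Ψ lam))) := by
  refine ⟨⟨dualEquivLHom ρM hρA, dualEquivLHom_apply ρM hρA, dualEquivLHom_symm_apply ρM hρA, ?_⟩,
    ⟨dualEquivRHom ρM hρB, dualEquivRHom_apply ρM hρB, dualEquivRHom_symm_apply ρM hρB, ?_⟩⟩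
  · rintro ⟨b, c⟩ h1 h2 lam
    have hcb : (c, b) ∈ X := mem_opp.mp h1
    have hD : ρD ⟨(b, c), h1⟩ lam = lam ∘ₗ ρM ⟨(c, b), hcb⟩⁻¹ :=
      LinearMap.ext (hρD b c h1 hcb lam)
    refine Subtype.ext (LinearMap.ext fun m => ?_)
    rw [hρE b c h2 c hcb ⟨b, hcb, h1⟩]
    exact (congrArg (toLHom ρM · m) hD).trans (toLHom_comp_inv ρM hρA hcb _ lam m)
  · rintro ⟨b, c⟩ h1 h2 lam
    have hcb : (c, b) ∈ X := mem_opp.mp h1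
    have hD : ρD ⟨(b, c), h1⟩ lam = lam ∘ₗ ρM ⟨(c, b), hcb⟩⁻¹ :=
      LinearMap.ext (hρD b c h1 hcb lam)
    refine Subtype.ext (LinearMap.ext fun m => ?_)
    rw [hρF b c h2 b ⟨c, h1, hcb⟩ hcb]
    exact (congrArg (toRHom ρM · m) hD).trans (toRHom_comp_inv ρM hρB hcb _ lam m)

/-- (a) `M° ≅ LHom^{X,X*X°}_{𝕜G}(M, 𝕜[k₁(X)])` as `𝕜X°`-modules via
`λ ↦ (m ↦ ∑_{g ∈ k₁(X)} λ(g⁻¹m)·g)`, with inverse `f ↦ (m ↦ t(f m))` where `t` takes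
the coefficient of `1`; (b) `M° ≅ RHom^{X,X°*X}_{𝕜H}(M, 𝕜[k₂(X)])` as `𝕜X°`-modules
via `λ ↦ (m ↦ ∑_{h ∈ k₂(X)} λ(m·h⁻¹)·h)`, with inverse `f ↦ (m ↦ t(f m))`. -/
theorem stmt11 {𝕜 : Type*} [CommRing 𝕜]
    {G H : Type*} [Group G] [Group H] [Finite G] [Finite H]
    (X : Subgroup (G × H)) [Fintype ↥(k1 X)] [Fintype ↥(k2 X)]
    {M : Type*} [AddCommGroup M] [Module 𝕜 M]
    (ρM : Representation 𝕜 ↥X M)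
    -- the `𝕜[X*X°]`-module structure on `𝕜[k₁(X)]`, `(g,g')·u = g·u·g'⁻¹`
    (ρA : Representation 𝕜 ↥(comp X (opp X)) (MonoidAlgebra 𝕜 ↥(k1 X)))
    (hρA : ∀ (g g' : G) (hm : (g, g') ∈ comp X (opp X)) (u : ↥(k1 X))
      (hu : g * (u : G) * g'⁻¹ ∈ k1 X) (c : 𝕜),
      ρA ⟨(g, g'), hm⟩ (MonoidAlgebra.single u c) =
        MonoidAlgebra.single (⟨g * (u : G) * g'⁻¹, hu⟩ : ↥(k1 X)) c)
    -- the `𝕜[X°*X]`-module structure on `𝕜[k₂(X)]`, `(h,h')·v = h·v·h'⁻¹`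
    (ρB : Representation 𝕜 ↥(comp (opp X) X) (MonoidAlgebra 𝕜 ↥(k2 X)))
    (hρB : ∀ (h h' : H) (hm : (h, h') ∈ comp (opp X) X) (v : ↥(k2 X))
      (hv : h * (v : H) * h'⁻¹ ∈ k2 X) (c : 𝕜),
      ρB ⟨(h, h'), hm⟩ (MonoidAlgebra.single v c) =
        MonoidAlgebra.single (⟨h * (v : H) * h'⁻¹, hv⟩ : ↥(k2 X)) c)
    -- the `𝕜X°`-module structure on the dual `M°`
    (ρD : Representation 𝕜 ↥(opp X) (M →ₗ[𝕜] 𝕜))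
    (hρD : ∀ (b : H) (c : G) (hbc : (b, c) ∈ opp X) (hcb : (c, b) ∈ X)
      (lam : M →ₗ[𝕜] 𝕜) (m : M),
      (ρD ⟨(b, c), hbc⟩ lam) m = lam (ρM (⟨(c, b), hcb⟩)⁻¹ m))
    -- the `𝕜[X°*(X*X°)]`-module structure on `LHom^{X,X*X°}(M, 𝕜[k₁(X)])`
    (ρE : Representation 𝕜 ↥(comp (opp X) (comp X (opp X)))
      ↥(lHomSub X (comp X (opp X)) ρM ρA))
    (hρE : ∀ (b : H) (c : G) (hbc : (b, c) ∈ comp (opp X) (comp X (opp X)))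
      (a : G) (h1 : (a, b) ∈ X) (h2 : (a, c) ∈ comp X (opp X))
      (f : ↥(lHomSub X (comp X (opp X)) ρM ρA)) (m : M),
      ((ρE ⟨(b, c), hbc⟩ f : M →ₗ[𝕜] MonoidAlgebra 𝕜 ↥(k1 X))) m =
        ρA ⟨(a, c), h2⟩ ((f : M →ₗ[𝕜] MonoidAlgebra 𝕜 ↥(k1 X)) (ρM (⟨(a, b), h1⟩)⁻¹ m)))
    -- the `𝕜[(X°*X)*X°]`-module structure on `RHom^{X,X°*X}(M, 𝕜[k₂(X)])`
    (ρF : Representation 𝕜 ↥(comp (comp (opp X) X) (opp X))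
      ↥(rHomSub X (comp (opp X) X) ρM ρB))
    (hρF : ∀ (c : H) (b : G) (hcb : (c, b) ∈ comp (comp (opp X) X) (opp X))
      (a : H) (h1 : (c, a) ∈ comp (opp X) X) (h2 : (b, a) ∈ X)
      (f : ↥(rHomSub X (comp (opp X) X) ρM ρB)) (m : M),
      ((ρF ⟨(c, b), hcb⟩ f : M →ₗ[𝕜] MonoidAlgebra 𝕜 ↥(k2 X))) m =
        ρB ⟨(c, a), h1⟩ ((f : M →ₗ[𝕜] MonoidAlgebra 𝕜 ↥(k2 X)) (ρM (⟨(b, a), h2⟩)⁻¹ m))) :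
    (∃ Φ : (M →ₗ[𝕜] 𝕜) ≃ₗ[𝕜] ↥(lHomSub X (comp X (opp X)) ρM ρA),
      (∀ (lam : M →ₗ[𝕜] 𝕜) (m : M),
        ((Φ lam : M →ₗ[𝕜] MonoidAlgebra 𝕜 ↥(k1 X))) m =
          ∑ g : ↥(k1 X), MonoidAlgebra.single g
            (lam (ρM ⟨((g : G)⁻¹, (1 : H)), k1_inv_prod_mem g⟩ m))) ∧
      (∀ (f : ↥(lHomSub X (comp X (opp X)) ρM ρA)) (m : M),
        (Φ.symm f) m = ((f : M →ₗ[𝕜] MonoidAlgebra 𝕜 ↥(k1 X)) m).coeff 1) ∧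
      (∀ (x : H × G) (h1 : x ∈ opp X)
        (h2 : x ∈ comp (opp X) (comp X (opp X))) (lam : M →ₗ[𝕜] 𝕜),
        Φ (ρD ⟨x, h1⟩ lam) = ρE ⟨x, h2⟩ (Φ lam))) ∧
    (∃ Ψ : (M →ₗ[𝕜] 𝕜) ≃ₗ[𝕜] ↥(rHomSub X (comp (opp X) X) ρM ρB),
      (∀ (lam : M →ₗ[𝕜] 𝕜) (m : M),
        ((Ψ lam : M →ₗ[𝕜] MonoidAlgebra 𝕜 ↥(k2 X))) m =
          ∑ h : ↥(k2 X), MonoidAlgebra.single h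
            (lam (ρM ⟨((1 : G), (h : H)), k2_prod_mem h⟩ m))) ∧
      (∀ (f : ↥(rHomSub X (comp (opp X) X) ρM ρB)) (m : M),
        (Ψ.symm f) m = ((f : M →ₗ[𝕜] MonoidAlgebra 𝕜 ↥(k2 X)) m).coeff 1) ∧
      (∀ (x : H × G) (h1 : x ∈ opp X)
        (h2 : x ∈ comp (comp (opp X) X) (opp X)) (lam : M →ₗ[𝕜] 𝕜),
        Ψ (ρD ⟨x, h1⟩ lam) = ρF ⟨x, h2⟩ (Ψ lam))) :=
  stmt11_general X ρM ρA hρA ρB hρB ρD hρD ρE hρE ρF hρF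

end Stmt11
end

section
/- Let G, H be finite groups, p a prime, 𝕂 a field of characteristic 0 containing a primitive |G×H|-th root of unity, and μ ∈ R(𝕂G,𝕂H) a virtual character of G×H. The following are equivalent: (i) μ is quasi-perfect, i.e. whenever μ(g,h) ≠ 0, g is p-regular if and only if h is p-regular; (ii) d_G ∘ I_μ = I_μ ∘ d_H as maps from class functions on H to class functions on G; (iii) d_H ∘ I_{μ°} = I_{μ°} ∘ d_G as maps from class functions on G to class functions on H. -/
/-!
Direction (i) ⇒ (ii) is a termwise comparison: in `I_μ(ψ)(g)` only terms with `μ(g,h) ≠ 0`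
survive, and for those `g` and `h` are simultaneously `p`-regular or not. For the converse,
feed (ii) the indicator of the conjugacy class of `h`: `I_μ` of it at `g` is a nonzero multiple
of `μ(g,h)`, and (ii) at `g` says that it is killed by `d_G` exactly when the indicator is killed
by `d_H`. Statement (iii) is (ii) for `μ°`, and `μ°` is quasi-perfect iff `μ` is, since
inversion preserves orders.
-/

namespace Stmt15

universe u

/-- `μ` is a virtual `𝕂`-character of `I`, i.e. a difference of characters of two
finite-dimensional representations. -/
def IsVirtualChar (𝕂 : Type u) [Field 𝕂] (I : Type u) [Group I] (μ : I → 𝕂) : Prop :=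
  ∃ V W : FDRep 𝕂 I, ∀ x, μ x = V.character x - W.character x

/-- `f` is a class function. -/
def IsClassFn {𝕂 : Type u} [Field 𝕂] {I : Type u} [Group I] (f : I → 𝕂) : Prop :=
  ∀ g x : I, f (x * g * x⁻¹) = f g

/-- The decomposition map `d`: truncation of a class function to the `p`-regular
elements. -/
noncomputable def dmap {𝕂 : Type u} [Field 𝕂] (p : ℕ) {I : Type u} [Group I] (χ : I → 𝕂) : I → 𝕂 :=
  fun x => if ¬ p ∣ orderOf x then χ x else 0

/-- The map `I_μ` induced by a virtual character `μ` of `G × H`: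
`I_μ(ψ)(g) = |H|⁻¹ ∑_{h ∈ H} μ(g,h) ψ(h)`. -/
noncomputable def Imap {𝕂 : Type u} [Field 𝕂] {G H : Type u} [Group G] [Group H] [Fintype H]
    (μ : G × H → 𝕂) (ψ : H → 𝕂) : G → 𝕂 :=
  fun g => (Fintype.card H : 𝕂)⁻¹ * ∑ h : H, μ (g, h) * ψ h

/-- The opposite virtual character `μ°(h,g) = μ(g⁻¹,h⁻¹)`. -/
def dualChar {𝕂 : Type u} [Field 𝕂] {G H : Type u} [Group G] [Group H]
    (μ : G × H → 𝕂) : H × G → 𝕂 :=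
  fun x => μ (x.2⁻¹, x.1⁻¹)

variable {𝕂 G H : Type u} [Field 𝕂] [Group G] [Group H]

def IsQuasiPerfect (p : ℕ) (ν : G × H → 𝕂) : Prop :=
  ∀ g h, ν (g, h) ≠ 0 → (¬ p ∣ orderOf g ↔ ¬ p ∣ orderOf h)

theorem isQuasiPerfect_dualChar_iff {p : ℕ} {ν : G × H → 𝕂} :
    IsQuasiPerfect p (dualChar ν) ↔ IsQuasiPerfect p ν := by
  constructor
  · intro hν g h hne
    simpa [dualChar, orderOf_inv] using (hν h⁻¹ g⁻¹ (by simpa [dualChar] using hne)).symm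
  · intro hν h g hne
    simpa [orderOf_inv] using (hν g⁻¹ h⁻¹ hne).symm

theorem IsVirtualChar.isClassFn {ν : G → 𝕂} (hν : IsVirtualChar 𝕂 G ν) : IsClassFn ν := by
  obtain ⟨V, W, hVW⟩ := hν
  intro g x
  rw [hVW, hVW, FDRep.char_conj, FDRep.char_conj]

theorem IsClassFn.dualChar {ν : G × H → 𝕂} (hν : IsClassFn ν) : IsClassFn (dualChar ν) := by
  rintro ⟨h, g⟩ ⟨y, x⟩
  simpa [Stmt15.dualChar, conj_inv, mul_assoc] using hν (g⁻¹, h⁻¹) (x, y)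

theorem IsClassFn.comp_prodMk {ν : G × H → 𝕂} (hν : IsClassFn ν) (g : G) :
    IsClassFn fun h => ν (g, h) :=
  fun h x => by simpa using hν (g, h) (1, x)

theorem orderOf_eq_of_isConj {a b : G} (hab : IsConj a b) : orderOf a = orderOf b := by
  obtain ⟨c, hc⟩ := hab
  exact hc.orderOf_eq _

theorem dmap_apply (p : ℕ) (χ : G → 𝕂) (g : G) :
    dmap p χ g = if ¬ p ∣ orderOf g then χ g else 0 :=
  rfl

section Imap

variable [Fintype H]

theorem Imap_apply (ν : G × H → 𝕂) (ψ : H → 𝕂) (g : G) :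
    Imap ν ψ g = (Fintype.card H : 𝕂)⁻¹ * ∑ h : H, ν (g, h) * ψ h :=
  rfl

theorem Imap_zero (ν : G × H → 𝕂) : Imap ν (0 : H → 𝕂) = 0 := by
  funext g
  simp [Imap_apply]

theorem IsQuasiPerfect.dmap_Imap {p : ℕ} {ν : G × H → 𝕂} (hν : IsQuasiPerfect p ν)
    (ψ : H → 𝕂) : dmap p (Imap ν ψ) = Imap ν (dmap p ψ) := by
  funext g
  have termwise : ∀ h, (if ¬ p ∣ orderOf g then ν (g, h) * ψ h else 0)
      = ν (g, h) * dmap p ψ h := by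
    intro h
    by_cases hne : ν (g, h) = 0
    · simp [hne]
    · simp [dmap_apply, hν g h hne]
  rw [dmap_apply, Imap_apply, Imap_apply, ← Finset.sum_congr rfl fun h _ => termwise h]
  split_ifs <;> simp

open Classical in
noncomputable def conjClassIndicator (h : H) : H → 𝕂 :=
  fun x => if IsConj h x then 1 else 0

theorem isClassFn_conjClassIndicator (h : H) : IsClassFn (conjClassIndicator (𝕂 := 𝕂) h) := by
  intro x c
  have hx : IsConj x (c * x * c⁻¹) := isConj_iff.mpr ⟨c, rfl⟩
  simp only [conjClassIndicator]
  congr 1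
  exact propext ⟨fun hc => hc.trans hx.symm, fun hc => hc.trans hx⟩

theorem dmap_conjClassIndicator (p : ℕ) (h : H) :
    dmap p (conjClassIndicator (𝕂 := 𝕂) h)
      = if ¬ p ∣ orderOf h then conjClassIndicator h else 0 := by
  funext x
  rw [dmap_apply]
  by_cases hx : IsConj h x
  · rw [← orderOf_eq_of_isConj hx]
    split_ifs <;> rfl
  · have hx0 : conjClassIndicator (𝕂 := 𝕂) h x = 0 := if_neg hx
    split_ifs <;> simp [hx0]

open Classical in
theorem Imap_conjClassIndicator {ν : G × H → 𝕂} (hν : ∀ g, IsClassFn fun h => ν (g, h))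
    (g : G) (h : H) :
    Imap ν (conjClassIndicator h) g
      = (Fintype.card H : 𝕂)⁻¹ * ((Finset.univ.filter (IsConj h)).card * ν (g, h)) := by
  have termwise : ∀ x, ν (g, x) * conjClassIndicator h x = if IsConj h x then ν (g, h) else 0 := by
    intro x
    by_cases hx : IsConj h x
    · obtain ⟨c, rfl⟩ := isConj_iff.mp hx
      rw [conjClassIndicator, if_pos hx, if_pos hx, mul_one]
      exact hν g h c
    · rw [conjClassIndicator, if_neg hx, if_neg hx, mul_zero]
  rw [Imap_apply, Finset.sum_congr rfl fun x _ => termwise x, ← Finset.sum_filter,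
    Finset.sum_const, nsmul_eq_mul]

theorem isQuasiPerfect_of_dmap_Imap [CharZero 𝕂] {p : ℕ} {ν : G × H → 𝕂}
    (hν : ∀ g, IsClassFn fun h => ν (g, h))
    (hcomm : ∀ ψ : H → 𝕂, IsClassFn ψ → dmap p (Imap ν ψ) = Imap ν (dmap p ψ)) :
    IsQuasiPerfect p ν := by
  classical
  intro g h hne
  have hI : Imap ν (conjClassIndicator h) g ≠ 0 := by
    rw [Imap_conjClassIndicator hν]
    have hclass : (Finset.univ.filter (IsConj h)).card ≠ 0 :=
      Finset.card_ne_zero_of_mem (Finset.mem_filter.mpr ⟨Finset.mem_univ h, IsConj.refl h⟩)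
    exact mul_ne_zero (inv_ne_zero (Nat.cast_ne_zero.mpr Fintype.card_ne_zero))
      (mul_ne_zero (Nat.cast_ne_zero.mpr hclass) hne)
  have hg := congrFun (hcomm _ (isClassFn_conjClassIndicator h)) g
  rw [dmap_conjClassIndicator, dmap_apply, apply_ite (Imap ν), Imap_zero] at hg
  by_cases hpg : p ∣ orderOf g <;> by_cases hph : p ∣ orderOf h <;> simp_all

theorem isQuasiPerfect_iff_dmap_Imap [CharZero 𝕂] (p : ℕ) {ν : G × H → 𝕂}
    (hν : ∀ g, IsClassFn fun h => ν (g, h)) :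
    IsQuasiPerfect p ν ↔
      ∀ ψ : H → 𝕂, IsClassFn ψ → dmap p (Imap ν ψ) = Imap ν (dmap p ψ) :=
  ⟨fun hq ψ _ => hq.dmap_Imap ψ, isQuasiPerfect_of_dmap_Imap hν⟩

end Imap

theorem stmt15_general {𝕂 : Type u} [Field 𝕂] [CharZero 𝕂] {G H : Type u}
    [Group G] [Group H] [Fintype G] [Fintype H] (p : ℕ)
    (μ : G × H → 𝕂) (hμ : IsVirtualChar 𝕂 (G × H) μ) :
    ((∀ g h, μ (g, h) ≠ 0 → (¬ p ∣ orderOf g ↔ ¬ p ∣ orderOf h)) ↔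
        (∀ ψ : H → 𝕂, IsClassFn ψ → dmap p (Imap μ ψ) = Imap μ (dmap p ψ))) ∧
      ((∀ g h, μ (g, h) ≠ 0 → (¬ p ∣ orderOf g ↔ ¬ p ∣ orderOf h)) ↔
        (∀ χ : G → 𝕂, IsClassFn χ →
          dmap p (Imap (dualChar μ) χ) = Imap (dualChar μ) (dmap p χ))) := by
  have hclass : IsClassFn μ := hμ.isClassFn
  exact ⟨isQuasiPerfect_iff_dmap_Imap p hclass.comp_prodMk,
    isQuasiPerfect_dualChar_iff.symm.trans
      (isQuasiPerfect_iff_dmap_Imap p hclass.dualChar.comp_prodMk)⟩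

/-- For a virtual character `μ ∈ R(𝕂G,𝕂H)` the following are
equivalent: (i) `μ` is quasi-perfect; (ii) `d_G ∘ I_μ = I_μ ∘ d_H` on class functions;
(iii) `d_H ∘ I_{μ°} = I_{μ°} ∘ d_G` on class functions. -/
theorem stmt15 {𝕂 : Type u} [Field 𝕂] [CharZero 𝕂] {G H : Type u}
    [Group G] [Group H] [Fintype G] [Fintype H] (p : ℕ) (hp : p.Prime)
    (hroot : ∃ ζ : 𝕂, IsPrimitiveRoot ζ (Fintype.card (G × H)))
    (μ : G × H → 𝕂) (hμ : IsVirtualChar 𝕂 (G × H) μ) :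
    ((∀ g h, μ (g, h) ≠ 0 → (¬ p ∣ orderOf g ↔ ¬ p ∣ orderOf h)) ↔
        (∀ ψ : H → 𝕂, IsClassFn ψ → dmap p (Imap μ ψ) = Imap μ (dmap p ψ))) ∧
      ((∀ g h, μ (g, h) ≠ 0 → (¬ p ∣ orderOf g ↔ ¬ p ∣ orderOf h)) ↔
        (∀ χ : G → 𝕂, IsClassFn χ →
          dmap p (Imap (dualChar μ) χ) = Imap (dualChar μ) (dmap p χ))) :=
  stmt15_general p μ hμ

end Stmt15
end

section
/- Let G and H be finite groups, 𝕂 a field of characteristic 0 containing a primitive |G×H|-th root of unity, and Y ≤ G×H a subgroup with p₁(Y) = G and p₂(Y) = H. Set M := k₁(Y) ⊴ G and N := k₂(Y) ⊴ H, and let η_Y : H/N → G/M be the isomorphism determined by: η_Y(hN) = gM if and only if (g,h) ∈ Y. Suppose S ⊆ Irr(𝕂M) is G-stable, T ⊆ Irr(𝕂N) is H-stable, μ is a virtual 𝕂-character of Y, α : T → S is a bijection and ε : T → {±1} is a family of signs such that Res^Y_{M×N}(μ) = Σ_{χ∈T} ε(χ)·(α(χ)×χ°). Then for every χ ∈ T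 and every h ∈ H, α(^{h}χ) = ^{g}α(χ) for any g ∈ G with gM = η_Y(hN); in particular α induces a bijection from the set of H-orbits of T onto the set of G-orbits of S. -/
/-!
Conjugation by `(g, h) ∈ Y` fixes the virtual character `μ`, hence its restriction to `M × N`.
On the right-hand side it turns `α χ × χ°` into `^g(α χ) × (^h χ)°`; reindexing the sum by
`χ ↦ ^h χ` and comparing coefficients of the linearly independent irreducible characters of `N`
gives `ε(^h χ) · α(^h χ) = ε(χ) · ^g(α χ)`. Irreducible characters take positive integer values
at `1`, so the signs agree and `α(^h χ) = ^g(α χ)`. The orbit statement follows because every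
`h ∈ H` has a partner `g ∈ G` with `(g, h) ∈ Y` and conversely, and `α` is injective on `T`.
-/

namespace Stmt19

universe u

/-- `k₁(X) = {g ∈ G ∣ (g,1) ∈ X}`. -/
def k1 {G H : Type*} [Group G] [Group H] (X : Subgroup (G × H)) : Subgroup G :=
  X.comap (MonoidHom.inl G H)

/-- `k₂(X) = {h ∈ H ∣ (1,h) ∈ X}`. -/
def k2 {G H : Type*} [Group G] [Group H] (X : Subgroup (G × H)) : Subgroup H :=
  X.comap (MonoidHom.inr G H)

/-- `p₁(X)`, the image of `X` under the first projection. -/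
def p1 {G H : Type*} [Group G] [Group H] (X : Subgroup (G × H)) : Subgroup G :=
  X.map (MonoidHom.fst G H)

/-- `p₂(X)`, the image of `X` under the second projection. -/
def p2 {G H : Type*} [Group G] [Group H] (X : Subgroup (G × H)) : Subgroup H :=
  X.map (MonoidHom.snd G H)

/-- The opposite subgroup `X° = {(h,g) ∣ (g,h) ∈ X}`. -/
def opp {G H : Type*} [Group G] [Group H] (X : Subgroup (G × H)) : Subgroup (H × G) :=
  X.map ((MulEquiv.prodComm : (G × H) ≃* (H × G)).toMonoidHom)

/-- The composition `X*Y` of subgroup correspondences. -/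
def comp {G H K : Type*} [Group G] [Group H] [Group K]
    (X : Subgroup (G × H)) (Y : Subgroup (H × K)) : Subgroup (G × K) where
  carrier := {gk | ∃ h : H, (gk.1, h) ∈ X ∧ (h, gk.2) ∈ Y}
  one_mem' := ⟨1, X.one_mem, Y.one_mem⟩
  mul_mem' := by
    rintro ⟨g, k⟩ ⟨g', k'⟩ ⟨h, hX, hY⟩ ⟨h', hX', hY'⟩
    exact ⟨h * h', X.mul_mem hX hX', Y.mul_mem hY hY'⟩
  inv_mem' := by
    rintro ⟨g, k⟩ ⟨h, hX, hY⟩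
    exact ⟨h⁻¹, X.inv_mem hX, Y.inv_mem hY⟩

lemma mem_comp {G H K : Type*} [Group G] [Group H] [Group K]
    {X : Subgroup (G × H)} {Y : Subgroup (H × K)} {x : G × K} :
    x ∈ comp X Y ↔ ∃ h : H, (x.1, h) ∈ X ∧ (h, x.2) ∈ Y := Iff.rfl

lemma mem_opp {G H : Type*} [Group G] [Group H] {X : Subgroup (G × H)} {x : H × G} :
    x ∈ opp X ↔ (x.2, x.1) ∈ X := by
  rw [opp, Subgroup.mem_map]
  constructor
  · rintro ⟨⟨g, h⟩, hgh, rfl⟩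
    simpa using hgh
  · intro hx
    exact ⟨(x.2, x.1), hx, rfl⟩

/-- The diagonal subgroup `Δ(P) = {(g,g) ∣ g ∈ P} ≤ G × G`. -/
def diag {G : Type*} [Group G] (P : Subgroup G) : Subgroup (G × G) :=
  (P.subtype.prod P.subtype).range

/-- The twisted diagonal subgroup `Δ(P,φ,Q) = {(φ y, y) ∣ y ∈ Q} ≤ G × H`. -/
def tdiag {G H : Type*} [Group G] [Group H] (P : Subgroup G) (Q : Subgroup H)
    (φ : Q ≃* P) : Subgroup (G × H) :=
  ((P.subtype.comp φ.toMonoidHom).prod Q.subtype).range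

/-- `μ` is a virtual `𝕂`-character of `I`. -/
def IsVirtualChar (𝕂 : Type u) [Field 𝕂] (I : Type u) [Group I] (μ : I → 𝕂) : Prop :=
  ∃ V W : FDRep 𝕂 I, ∀ x, μ x = V.character x - W.character x

/-- `χ` is an irreducible `𝕂`-character of `I`. -/
def IsIrrChar (𝕂 : Type u) [Field 𝕂] (I : Type u) [Group I] (χ : I → 𝕂) : Prop :=
  ∃ V : FDRep 𝕂 I, CategoryTheory.Simple V ∧ ∀ x, χ x = V.character x

/-- The conjugate character `^g χ`, with `(^g χ)(x) = χ(g⁻¹ x g)`, of a character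
of a normal subgroup `M ⊴ G`. -/
def conjChar {𝕂 : Type u} [Field 𝕂] {G : Type u} [Group G] (M : Subgroup G)
    (hM : M.Normal) (g : G) (χ : ↥M → 𝕂) : ↥M → 𝕂 :=
  fun x => χ ⟨g⁻¹ * (x : G) * g, by simpa using hM.conj_mem _ x.2 g⁻¹⟩

end Stmt19

namespace FDRep

open CategoryTheory Module

variable {k : Type u} [Field k] {I : Type u} [Group I]

theorem finrank_ne_zero_of_simple (V : FDRep k I) [Simple V] : finrank k V ≠ 0 := by
  intro h0
  have : Subsingleton V := finrank_zero_iff.mp h0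
  have : Subsingleton (V ⟶ V) := ⟨fun f f' => by ext x; exact Subsingleton.elim _ _⟩
  exact id_nonzero V (Subsingleton.elim _ _)

variable [Fintype I]

theorem sum_char_mul_char_inv_eq_zero [Invertible (Nat.card I : k)] (V W : FDRep k I)
    [Simple V] [Simple W] (hne : V.character ≠ W.character) :
    ∑ g : I, V.character g * W.character g⁻¹ = 0 := by
  have hzero : ∀ f : W ⟶ V, f = 0 := fun f => by
    by_contra hf
    have := isIso_of_hom_simple hf
    exact hne (char_iso (asIso f).symm)
  have : Subsingleton (W ⟶ V) := ⟨fun f f' => by rw [hzero f, hzero f']⟩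
  have h := scalar_product_char_eq_finrank_equivariant W V
  rw [finrank_zero_of_subsingleton, Nat.cast_zero] at h
  exact (mul_eq_zero.mp h).resolve_left (inv_ne_zero (Invertible.ne_zero _))

theorem sum_char_mul_char_inv_self_ne_zero [CharZero k] (V : FDRep k I) [Simple V] :
    ∑ g : I, V.character g * V.character g⁻¹ ≠ 0 := by
  let : Invertible (Nat.card I : k) := invertibleOfNonzero (by simp)
  have : FiniteDimensional k (V ⟶ V) :=
    (Representation.linHom.invariantsEquivFDRepHom V V).finiteDimensional
  have : Nontrivial (V ⟶ V) := ⟨⟨𝟙 V, 0, id_nonzero V⟩⟩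
  have h := scalar_product_char_eq_finrank_equivariant V V
  intro hsum
  rw [hsum, mul_zero, eq_comm, Nat.cast_eq_zero] at h
  exact finrank_pos.ne' h

end FDRep

namespace Stmt19

section Characters

variable {k : Type u} [Field k] {I : Type u} [Group I]

theorem sign_eq_of_mul_natCast_eq [CharZero k] {e e' : ℤ} (he : e = 1 ∨ e = -1)
    (he' : e' = 1 ∨ e' = -1) {a b : ℕ} (ha : a ≠ 0) (hb : b ≠ 0)
    (h : (e : k) * a = (e' : k) * b) : e = e' := by
  have hne : ∀ p q : ℕ, p ≠ 0 → (p : k) ≠ -q := fun p q hp hpq => by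
    have : ((p + q : ℕ) : k) = 0 := by push_cast; rw [hpq]; ring
    have := Nat.cast_eq_zero.mp this
    omega
  rcases he with rfl | rfl <;> rcases he' with rfl | rfl <;> push_cast at h
  · rfl
  · exact absurd (by linear_combination h) (hne a b ha)
  · exact absurd (by linear_combination -h) (hne b a hb)
  · rfl

theorem IsVirtualChar.apply_conj {μ : I → k} (hμ : IsVirtualChar k I μ) (x y : I) :
    μ (y⁻¹ * x * y) = μ x := by
  obtain ⟨V, W, hVW⟩ := hμ
  simpa only [hVW, inv_inv] using
    congrArg₂ (· - ·) (FDRep.char_conj V x y⁻¹) (FDRep.char_conj W x y⁻¹)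

theorem IsIrrChar.exists_apply_one_eq_natCast {χ : I → k} (hχ : IsIrrChar k I χ) :
    ∃ d : ℕ, d ≠ 0 ∧ χ 1 = d := by
  obtain ⟨V, _, hV⟩ := hχ
  exact ⟨_, FDRep.finrank_ne_zero_of_simple V, by rw [hV, FDRep.char_one]⟩

theorem IsIrrChar.eq_of_sign_mul_eq [CharZero k] {χ ψ : I → k} (hχ : IsIrrChar k I χ)
    (hψ : IsIrrChar k I ψ) {e e' : ℤ} (he : e = 1 ∨ e = -1) (he' : e' = 1 ∨ e' = -1)
    (h : ∀ x, (e : k) * χ x = e' * ψ x) : χ = ψ := by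
  obtain ⟨a, ha, hχ1⟩ := hχ.exists_apply_one_eq_natCast
  obtain ⟨b, hb, hψ1⟩ := hψ.exists_apply_one_eq_natCast
  have hee : e = e' := sign_eq_of_mul_natCast_eq he he' ha hb (by rw [← hχ1, ← hψ1, h])
  have he0 : (e : k) ≠ 0 := by rcases he with rfl | rfl <;> norm_num
  funext x
  exact mul_left_cancel₀ he0 (hee ▸ h x)

theorem IsIrrChar.sum_mul_inv_eq_zero [Fintype I] [Invertible (Nat.card I : k)] {χ ψ : I → k}
    (hχ : IsIrrChar k I χ) (hψ : IsIrrChar k I ψ) (hne : χ ≠ ψ) :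
    ∑ x, χ x * ψ x⁻¹ = 0 := by
  obtain ⟨V, _, hV⟩ := hχ
  obtain ⟨W, _, hW⟩ := hψ
  simp only [hV, hW]
  refine FDRep.sum_char_mul_char_inv_eq_zero V W fun hVW => hne ?_
  funext x
  rw [hV, hW, hVW]

theorem IsIrrChar.sum_mul_inv_self_ne_zero [CharZero k] [Fintype I] {χ : I → k}
    (hχ : IsIrrChar k I χ) : ∑ x, χ x * χ x⁻¹ ≠ 0 := by
  obtain ⟨V, _, hV⟩ := hχ
  simpa only [hV] using FDRep.sum_char_mul_char_inv_self_ne_zero V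

theorem IsIrrChar.coeff_eq_of_forall_sum_mul_eq [CharZero k] [Finite I] {T : Finset (I → k)}
    (hT : ∀ χ ∈ T, IsIrrChar k I χ) {c d : (I → k) → k}
    (h : ∀ x, ∑ χ ∈ T, c χ * χ x = ∑ χ ∈ T, d χ * χ x) {χ₀ : I → k} (hχ₀ : χ₀ ∈ T) :
    c χ₀ = d χ₀ := by
  have := Fintype.ofFinite I
  let : Invertible (Nat.card I : k) := invertibleOfNonzero (by simp)
  have extract : ∀ e : (I → k) → k,
      ∑ x, (∑ χ ∈ T, e χ * χ x) * χ₀ x⁻¹ = e χ₀ * ∑ x, χ₀ x * χ₀ x⁻¹ := fun e => by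
    simp_rw [Finset.sum_mul, mul_assoc]
    rw [Finset.sum_comm, Finset.sum_eq_single_of_mem χ₀ hχ₀, Finset.mul_sum]
    intro χ hχ hne
    rw [← Finset.mul_sum, (hT χ hχ).sum_mul_inv_eq_zero (hT χ₀ hχ₀) hne, mul_zero]
  refine mul_right_cancel₀ (hT χ₀ hχ₀).sum_mul_inv_self_ne_zero ?_
  rw [← extract, ← extract]
  simp_rw [h]

end Characters

section Conjugation

variable {𝕂 : Type u} [Field 𝕂] {G : Type u} [Group G] {M : Subgroup G} (hM : M.Normal)

theorem conjChar_inv_conjChar (a : G) (χ : M → 𝕂) :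
    conjChar M hM a⁻¹ (conjChar M hM a χ) = χ := by
  funext x
  exact congrArg χ (Subtype.ext (by group))

theorem conjChar_conjChar_inv (a : G) (χ : M → 𝕂) :
    conjChar M hM a (conjChar M hM a⁻¹ χ) = χ := by
  simpa using conjChar_inv_conjChar hM a⁻¹ χ

theorem sum_comp_conjChar {R : Type*} [AddCommMonoid R] {T : Finset (M → 𝕂)}
    (hT : ∀ a : G, ∀ χ ∈ T, conjChar M hM a χ ∈ T) (a : G) (f : (M → 𝕂) → R) :
    ∑ χ ∈ T, f (conjChar M hM a χ) = ∑ χ ∈ T, f χ :=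
  Finset.sum_nbij' (conjChar M hM a) (conjChar M hM a⁻¹) (hT a) (hT a⁻¹)
    (fun χ _ => conjChar_inv_conjChar hM a χ)
    (fun χ _ => conjChar_conjChar_inv hM a χ) (fun _ _ => rfl)

end Conjugation

section Correspondence

variable {G H : Type u} [Group G] [Group H] {Y : Subgroup (G × H)}

theorem exists_mem_of_p1_eq_top (hp1 : p1 Y = ⊤) (g : G) : ∃ h : H, (g, h) ∈ Y := by
  obtain ⟨⟨g', h⟩, hy, rfl⟩ := Subgroup.mem_map.mp (hp1 ▸ Subgroup.mem_top g)
  exact ⟨h, hy⟩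

theorem exists_mem_of_p2_eq_top (hp2 : p2 Y = ⊤) (h : H) : ∃ g : G, (g, h) ∈ Y := by
  obtain ⟨⟨g, h'⟩, hy, rfl⟩ := Subgroup.mem_map.mp (hp2 ▸ Subgroup.mem_top h)
  exact ⟨g, hy⟩

theorem coe_k1_k2_mem (m : k1 Y) (n : k2 Y) : ((m : G), (n : H)) ∈ Y := by
  simpa using Y.mul_mem m.2 n.2

variable {𝕂 : Type u} [Field 𝕂] (hMnorm : (k1 Y).Normal) (hNnorm : (k2 Y).Normal)
  {T : Finset (k2 Y → 𝕂)} {μ : Y → 𝕂} {α : (k2 Y → 𝕂) → (k1 Y → 𝕂)} {ε : (k2 Y → 𝕂) → ℤ}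

theorem sum_conjChar_eq_sum (hμ : IsVirtualChar 𝕂 Y μ)
    (hres : ∀ (m : k1 Y) (n : k2 Y),
      μ ⟨((m : G), (n : H)), coe_k1_k2_mem m n⟩ = ∑ χ ∈ T, (ε χ : 𝕂) * (α χ m * χ n⁻¹))
    {g : G} {h : H} (hy : (g, h) ∈ Y) (m : k1 Y) (n : k2 Y) :
    ∑ χ ∈ T, (ε χ : 𝕂) *
        (conjChar (k1 Y) hMnorm g (α χ) m * conjChar (k2 Y) hNnorm h χ n⁻¹) =
      ∑ χ ∈ T, (ε χ : 𝕂) * (α χ m * χ n⁻¹) := by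
  let m' : k1 Y := ⟨g⁻¹ * m * g, by simpa using hMnorm.conj_mem _ m.2 g⁻¹⟩
  let n' : k2 Y := ⟨h⁻¹ * n * h, by simpa using hNnorm.conj_mem _ n.2 h⁻¹⟩
  calc _ = ∑ χ ∈ T, (ε χ : 𝕂) * (α χ m' * χ n'⁻¹) := by
        refine Finset.sum_congr rfl fun χ _ => ?_
        congr 2
        exact congrArg χ (Subtype.ext (by simp [n', mul_assoc]))
    _ = μ (⟨(g, h), hy⟩⁻¹ * ⟨((m : G), (n : H)), coe_k1_k2_mem m n⟩ * ⟨(g, h), hy⟩) :=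
        (hres m' n').symm
    _ = _ := by rw [hμ.apply_conj, hres]

theorem sign_mul_apply_conjChar_eq [CharZero 𝕂] [Finite H]
    (hTirr : ∀ χ ∈ T, IsIrrChar 𝕂 (k2 Y) χ)
    (hTstab : ∀ (h : H), ∀ χ ∈ T, conjChar (k2 Y) hNnorm h χ ∈ T)
    (hμ : IsVirtualChar 𝕂 Y μ)
    (hres : ∀ (m : k1 Y) (n : k2 Y),
      μ ⟨((m : G), (n : H)), coe_k1_k2_mem m n⟩ = ∑ χ ∈ T, (ε χ : 𝕂) * (α χ m * χ n⁻¹))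
    {g : G} {h : H} (hy : (g, h) ∈ Y) {χ : k2 Y → 𝕂} (hχ : χ ∈ T) (m : k1 Y) :
    (ε (conjChar (k2 Y) hNnorm h χ) : 𝕂) * α (conjChar (k2 Y) hNnorm h χ) m =
      ε χ * conjChar (k1 Y) hMnorm g (α χ) m := by
  let σ : (k2 Y → 𝕂) → k2 Y → 𝕂 := conjChar (k2 Y) hNnorm h
  let c := fun ψ : k2 Y → 𝕂 => (ε (conjChar (k2 Y) hNnorm h⁻¹ ψ) : 𝕂) *
    conjChar (k1 Y) hMnorm g (α (conjChar (k2 Y) hNnorm h⁻¹ ψ)) m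
  suffices hcoeff : c (σ χ) = ε (σ χ) * α (σ χ) m by
    rw [← hcoeff]
    simp only [c, σ, conjChar_inv_conjChar]
  refine IsIrrChar.coeff_eq_of_forall_sum_mul_eq hTirr (c := c) (d := fun ψ => ε ψ * α ψ m)
    (fun n => ?_) (hTstab h χ hχ)
  calc ∑ ψ ∈ T, c ψ * ψ n
      = ∑ ψ ∈ T, (ε ψ : 𝕂) *
          (conjChar (k1 Y) hMnorm g (α ψ) m * conjChar (k2 Y) hNnorm h ψ n⁻¹⁻¹) := by
        conv_rhs => rw [← sum_comp_conjChar hNnorm hTstab h⁻¹]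
        refine Finset.sum_congr rfl fun ψ _ => ?_
        simp only [c, inv_inv, conjChar_conjChar_inv]
        ring
    _ = ∑ ψ ∈ T, (ε ψ : 𝕂) * (α ψ m * ψ n⁻¹⁻¹) :=
        sum_conjChar_eq_sum hMnorm hNnorm hμ hres hy m n⁻¹
    _ = ∑ ψ ∈ T, ε ψ * α ψ m * ψ n := by simp only [inv_inv, mul_assoc]

end Correspondence

/-- Let `Y ≤ G×H` with `p₁(Y) = G`, `p₂(Y) = H`, `M := k₁(Y) ⊴ G`,
`N := k₂(Y) ⊴ H`.  Suppose `S ⊆ Irr(𝕂M)` is `G`-stable, `T ⊆ Irr(𝕂N)` is `H`-stable,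
`μ` is a virtual character of `Y`, `α : T → S` a bijection and `ε : T → {±1}` signs
with `Res^Y_{M×N}(μ) = ∑_{χ∈T} ε(χ)·(α(χ)×χ°)`.  Then for every `χ ∈ T`, `h ∈ H`
and `g ∈ G` with `(g,h) ∈ Y` (i.e. `g·M = η_Y(h·N)`) one has `α(^hχ) = ^g(α χ)`;
in particular `α` induces a bijection from the `H`-orbits of `T` onto the
`G`-orbits of `S`. -/
theorem stmt19 {𝕂 : Type u} [Field 𝕂] [CharZero 𝕂] {G H : Type u}
    [Group G] [Group H] [Fintype H]
    (Y : Subgroup (G × H)) (hp1 : p1 Y = ⊤) (hp2 : p2 Y = ⊤)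
    (hMnorm : (k1 Y).Normal) (hNnorm : (k2 Y).Normal)
    (S : Set (↥(k1 Y) → 𝕂)) (hSirr : ∀ χ ∈ S, IsIrrChar 𝕂 ↥(k1 Y) χ)
    (hSstab : ∀ (g : G), ∀ χ ∈ S, conjChar (k1 Y) hMnorm g χ ∈ S)
    (T : Finset (↥(k2 Y) → 𝕂)) (hTirr : ∀ χ ∈ T, IsIrrChar 𝕂 ↥(k2 Y) χ)
    (hTstab : ∀ (h : H), ∀ χ ∈ T, conjChar (k2 Y) hNnorm h χ ∈ T)
    (μ : ↥Y → 𝕂) (hμ : IsVirtualChar 𝕂 ↥Y μ)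
    (α : (↥(k2 Y) → 𝕂) → (↥(k1 Y) → 𝕂)) (hα : Set.BijOn α (↑T) S)
    (ε : (↥(k2 Y) → 𝕂) → ℤ) (hε : ∀ χ ∈ T, ε χ = 1 ∨ ε χ = -1)
    (hres : ∀ (m : ↥(k1 Y)) (n : ↥(k2 Y)),
      μ ⟨((m : G), (n : H)), by
        have h1 : (((m : G), (1 : H)) : G × H) ∈ Y := m.2
        have h2 : (((1 : G), (n : H)) : G × H) ∈ Y := n.2
        simpa using Y.mul_mem h1 h2⟩ =
      ∑ χ ∈ T, (ε χ : 𝕂) * (α χ m * χ n⁻¹)) :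
    (∀ χ ∈ T, ∀ (g : G) (h : H), (g, h) ∈ Y →
        α (conjChar (k2 Y) hNnorm h χ) = conjChar (k1 Y) hMnorm g (α χ)) ∧
      (∀ χ ∈ T, ∀ χ' ∈ T,
        ((∃ h : H, χ' = conjChar (k2 Y) hNnorm h χ) ↔
          (∃ g : G, α χ' = conjChar (k1 Y) hMnorm g (α χ)))) := by
  have hconj : ∀ χ ∈ T, ∀ (g : G) (h : H), (g, h) ∈ Y →
      α (conjChar (k2 Y) hNnorm h χ) = conjChar (k1 Y) hMnorm g (α χ) :=
    fun χ hχ g h hy => IsIrrChar.eq_of_sign_mul_eq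
      (hSirr _ (hα.mapsTo (hTstab h χ hχ))) (hSirr _ (hSstab g _ (hα.mapsTo hχ)))
      (hε _ (hTstab h χ hχ)) (hε χ hχ)
      (sign_mul_apply_conjChar_eq hMnorm hNnorm hTirr hTstab hμ hres hy hχ)
  refine ⟨hconj, fun χ hχ χ' hχ' => ⟨?_, ?_⟩⟩
  · rintro ⟨h, rfl⟩
    obtain ⟨g, hy⟩ := exists_mem_of_p2_eq_top hp2 h
    exact ⟨g, hconj χ hχ g h hy⟩
  · rintro ⟨g, hg⟩
    obtain ⟨h, hy⟩ := exists_mem_of_p1_eq_top hp1 g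
    exact ⟨h, hα.injOn hχ' (hTstab h χ hχ) (by rw [hg, hconj χ hχ g h hy])⟩

end Stmt19
end
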